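/- arXiv:2310.16580 — 5 statements merged into one kernel-verified Lean document; each statement's English description precedes it below -/
import Mathlib

section
/- Suppose f is C^p with D^p f globally Lipschitz with constant L_p, a step s_k satisfies T_{f,p}(x_k,0) - T_{f,p}(x_k,s_k) > (sigma_k/(p+1)!)||s_k||^{p+1}, and sigma_k >= 2 L_p. Then f(x_k) - f(x_k + s_k) > (sigma_k/(2(p+1)!)) ||s_k||^{p+1}. -/
/-- Degree-`p` Taylor polynomial of `f` at `x`, evaluated at increment `s`. -/
noncomputable def taylorPoly {n : ℕ} (p : ℕ) (f : EuclideanSpace ℝ (Fin n) → ℝ)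
    (x s : EuclideanSpace ℝ (Fin n)) : ℝ :=
  f x + ∑ i ∈ Finset.Icc 1 p, (1 / (i.factorial : ℝ)) * iteratedFDeriv ℝ i f x (fun _ => s)

/-!
Taylor's formula with integral remainder gives, for `p = q + 1`,
`f (x + s) - T_p(x, s) = (1/q!) ∫₀¹ (1 - t)^q (D^p f(x + t s) - D^p f(x))[s, …, s] dt`.
The Lipschitz bound makes the integrand at most `L t (1 - t)^q ‖s‖^(p+1)`, and
`∫₀¹ t (1 - t)^q dt = 1/((q + 1)(q + 2))`, so the remainder is at most `L ‖s‖^(p+1) / (p+1)!`.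
When `σ ≥ 2 L` this eats at most half of the model decrease `σ ‖s‖^(p+1) / (p+1)!`.
-/

open Nat Finset intervalIntegral

section TaylorRemainder

variable {E F : Type*} [NormedAddCommGroup E] [NormedSpace ℝ E]
  [NormedAddCommGroup F] [NormedSpace ℝ F]

theorem norm_iteratedFDeriv_apply_add_smul_sub_le {f : E → F} {p : ℕ} {L : ℝ}
    (hlip : ∀ x y, ‖iteratedFDeriv ℝ p f x - iteratedFDeriv ℝ p f y‖ ≤ L * ‖x - y‖)
    (x y : E) {t : ℝ} (ht : 0 ≤ t) :
    ‖iteratedFDeriv ℝ p f (x + t • y) (fun _ ↦ y) - iteratedFDeriv ℝ p f x (fun _ ↦ y)‖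
      ≤ L * t * ‖y‖ ^ (p + 1) := by
  rw [← sub_apply]
  calc _ ≤ ‖iteratedFDeriv ℝ p f (x + t • y) - iteratedFDeriv ℝ p f x‖ * ‖y‖ ^ p :=
        ContinuousMultilinearMap.le_opNorm_mul_pow_of_le _ (pi_norm_const_le y)
    _ ≤ L * ‖t • y‖ * ‖y‖ ^ p := by
        gcongr
        simpa using hlip (x + t • y) x
    _ = L * t * ‖y‖ ^ (p + 1) := by
        rw [norm_smul, Real.norm_of_nonneg ht]; ring

theorem integral_one_sub_pow (q : ℕ) : ∫ t in (0 : ℝ)..1, (1 - t) ^ q = 1 / (q + 1) := by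
  simp [integral_comp_sub_left (fun t : ℝ ↦ t ^ q) 1]

theorem integral_mul_one_sub_pow (q : ℕ) :
    ∫ t in (0 : ℝ)..1, t * (1 - t) ^ q = 1 / ((q + 1) * (q + 2)) := by
  have hsub := integral_comp_sub_left (a := 0) (b := 1) (fun t : ℝ ↦ (1 - t) * t ^ q) 1
  simp only [sub_sub_cancel, sub_self, sub_zero] at hsub
  have hexpand : (fun t : ℝ ↦ (1 - t) * t ^ q) = fun t ↦ t ^ q - t ^ (q + 1) := by
    ext t; ring
  rw [hsub, hexpand, integral_sub (intervalIntegrable_pow _)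
    (intervalIntegrable_pow _), integral_pow, integral_pow]
  field_simp
  push_cast
  ring

variable [CompleteSpace F]

theorem norm_map_add_sub_sum_iteratedFDeriv_le {f : E → F} {p : ℕ} {L : ℝ}
    (hf : ContDiff ℝ p f)
    (hlip : ∀ x y, ‖iteratedFDeriv ℝ p f x - iteratedFDeriv ℝ p f y‖ ≤ L * ‖x - y‖) (x y : E) :
    ‖f (x + y) - ∑ k ∈ range (p + 1), (k ! : ℝ)⁻¹ • iteratedFDeriv ℝ k f x (fun _ ↦ y)‖
      ≤ L * ‖y‖ ^ (p + 1) / (p + 1)! := by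
  cases p with
  | zero => simpa using norm_iteratedFDeriv_apply_add_smul_sub_le hlip x y zero_le_one
  | succ q =>
    set g : ℝ → F := fun t ↦ iteratedFDeriv ℝ (q + 1) f (x + t • y) (fun _ ↦ y)
    have hg : Continuous g := by
      have := hf.continuous_iteratedFDeriv (m := q + 1) le_rfl
      fun_prop
    have hremainder : f (x + y) - ∑ k ∈ range (q + 2),
          (k ! : ℝ)⁻¹ • iteratedFDeriv ℝ k f x (fun _ ↦ y)
        = (q ! : ℝ)⁻¹ • ∫ t in (0 : ℝ)..1, (1 - t) ^ q • (g t - g 0) := by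
      have hsplit : ∫ t in (0 : ℝ)..1, (1 - t) ^ q • (g t - g 0)
          = (∫ t in (0 : ℝ)..1, (1 - t) ^ q • g t) - (1 / (q + 1) : ℝ) • g 0 := by
        simp_rw [smul_sub]
        rw [integral_sub ((by fun_prop : Continuous _).intervalIntegrable _ _)
            ((by fun_prop : Continuous _).intervalIntegrable _ _),
          intervalIntegral.integral_smul_const, integral_one_sub_pow]
      rw [map_add_eq_sum_add_integral_iteratedFDeriv (n := q) fun t _ ↦ hf.contDiffAt,
        sum_range_succ _ (q + 1), hsplit]
      simp [g, factorial_succ, smul_sub, smul_smul]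
    have hbound : ‖∫ t in (0 : ℝ)..1, (1 - t) ^ q • (g t - g 0)‖
        ≤ ∫ t in (0 : ℝ)..1, (1 - t) ^ q * (L * t * ‖y‖ ^ (q + 2)) := by
      refine norm_integral_le_of_norm_le zero_le_one (.of_forall fun t ht ↦ ?_)
        ((by fun_prop : Continuous _).intervalIntegrable _ _)
      rw [norm_smul, norm_pow, Real.norm_of_nonneg (sub_nonneg.2 ht.2)]
      refine mul_le_mul_of_nonneg_left ?_ (pow_nonneg (sub_nonneg.2 ht.2) _)
      simpa [g] using norm_iteratedFDeriv_apply_add_smul_sub_le hlip x y ht.1.le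
    have hintegral : ∫ t in (0 : ℝ)..1, (1 - t) ^ q * (L * t * ‖y‖ ^ (q + 2))
        = L * ‖y‖ ^ (q + 2) / ((q + 1) * (q + 2)) := by
      calc _ = ∫ t in (0 : ℝ)..1, L * ‖y‖ ^ (q + 2) * (t * (1 - t) ^ q) := by
            congr 1; ext t; ring
        _ = _ := by rw [intervalIntegral.integral_const_mul, integral_mul_one_sub_pow]; ring
    rw [hremainder, norm_smul, norm_inv, RCLike.norm_natCast]
    calc (q ! : ℝ)⁻¹ * ‖∫ t in (0 : ℝ)..1, (1 - t) ^ q • (g t - g 0)‖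
        ≤ (q ! : ℝ)⁻¹ * (L * ‖y‖ ^ (q + 2) / ((q + 1) * (q + 2))) := by
          gcongr; exact hbound.trans_eq hintegral
      _ = L * ‖y‖ ^ (q + 1 + 1) / (q + 1 + 1)! := by
          simp only [factorial_succ]; push_cast; field_simp; ring

end TaylorRemainder

section taylorPoly

variable {n : ℕ} (p : ℕ) (f : EuclideanSpace ℝ (Fin n) → ℝ) (x : EuclideanSpace ℝ (Fin n))

theorem taylorPoly_eq_sum_range (s : EuclideanSpace ℝ (Fin n)) :
    taylorPoly p f x s
      = ∑ k ∈ range (p + 1), (k ! : ℝ)⁻¹ • iteratedFDeriv ℝ k f x (fun _ ↦ s) := by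
  rw [taylorPoly, range_eq_Ico, sum_eq_sum_Ico_succ_bot (by positivity), zero_add,
    Ico_add_one_right_eq_Icc]
  simp [one_div]

theorem taylorPoly_zero_right : taylorPoly p f x 0 = f x := by
  rw [taylorPoly, sum_eq_zero fun i hi ↦ ?_, add_zero]
  rw [ContinuousMultilinearMap.map_coord_zero _ (⟨0, (mem_Icc.1 hi).1⟩ : Fin i) rfl, mul_zero]

end taylorPoly

theorem function_decrease_general {n : ℕ} (p : ℕ)
    (f : EuclideanSpace ℝ (Fin n) → ℝ) (L σ : ℝ)
    (hf : ContDiff ℝ (p : ℕ∞) f)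
    (hlip : ∀ x y : EuclideanSpace ℝ (Fin n),
      ‖iteratedFDeriv ℝ p f x - iteratedFDeriv ℝ p f y‖ ≤ L * ‖x - y‖)
    (xk sk : EuclideanSpace ℝ (Fin n))
    (hTdecr : taylorPoly p f xk 0 - taylorPoly p f xk sk
      > σ / ((p + 1).factorial : ℝ) * ‖sk‖ ^ (p + 1))
    (hσ : 2 * L ≤ σ) :
    f xk - f (xk + sk) > σ / (2 * ((p + 1).factorial : ℝ)) * ‖sk‖ ^ (p + 1) := by
  have hremainder := norm_map_add_sub_sum_iteratedFDeriv_le hf hlip xk sk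
  rw [← taylorPoly_eq_sum_range, Real.norm_eq_abs, abs_le] at hremainder
  rw [taylorPoly_zero_right] at hTdecr
  have hmargin : σ / (2 * ((p + 1)! : ℝ)) * ‖sk‖ ^ (p + 1)
      ≤ σ / ((p + 1)! : ℝ) * ‖sk‖ ^ (p + 1) - L * ‖sk‖ ^ (p + 1) / (p + 1)! := by
    calc _ = σ * (‖sk‖ ^ (p + 1) / (p + 1)!) - σ / 2 * (‖sk‖ ^ (p + 1) / (p + 1)!) := by ring
      _ ≤ σ * (‖sk‖ ^ (p + 1) / (p + 1)!) - L * (‖sk‖ ^ (p + 1) / (p + 1)!) := by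
        gcongr; linarith
      _ = _ := by ring
  linarith [hremainder.2]

/-- If the Taylor decrease condition holds and `σ_k ≥ 2 L_p`, then
`f(x_k) - f(x_k + s_k) > (σ_k/(2(p+1)!))‖s_k‖^(p+1)`. -/
theorem function_decrease {n : ℕ} (p : ℕ) (hp : 1 ≤ p)
    (f : EuclideanSpace ℝ (Fin n) → ℝ) (L σ : ℝ) (hL : 0 ≤ L)
    (hf : ContDiff ℝ (p : ℕ∞) f)
    (hlip : ∀ x y : EuclideanSpace ℝ (Fin n),
      ‖iteratedFDeriv ℝ p f x - iteratedFDeriv ℝ p f y‖ ≤ L * ‖x - y‖)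
    (xk sk : EuclideanSpace ℝ (Fin n))
    (hTdecr : taylorPoly p f xk 0 - taylorPoly p f xk sk
      > σ / ((p + 1).factorial : ℝ) * ‖sk‖ ^ (p + 1))
    (hσ : 2 * L ≤ σ) :
    f xk - f (xk + sk) > σ / (2 * ((p + 1).factorial : ℝ)) * ‖sk‖ ^ (p + 1) :=
  function_decrease_general p f L σ hf hlip xk sk hTdecr hσ
end

section
/- Suppose f is C^p with D^p f Lipschitz with constant L_p, and at iteration k-1 the sketched gradient condition holds: grad_shat That(x_{k-1}, shat_{k-1}) = S_{k-1} grad_s T_{f,p}(x_{k-1}, s_{k-1}) where s_{k-1} = S_{k-1}^T shat_{k-1}. Then (||S_{k-1} g_k|| - ||grad_shat That(x_{k-1}, shat_{k-1})||) / (||S_{k-1}|| ||s_{k-1}||^p) <= L_p, where g_k = grad f(x_{k-1} + s_{k-1}). -/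
open Finset Nat

variable {E F : Type*} [NormedAddCommGroup E] [NormedSpace ℝ E]
  [NormedAddCommGroup F] [NormedSpace ℝ F]

theorem Fin.update_const_succ {α : Type*} {n : ℕ} (a b : α) (k : Fin n) :
    Function.update (fun _ : Fin (n + 1) => a) k.succ b
      = Fin.cons a (Function.update (fun _ => a) k b) := by
  rw [Fin.cons_update, ← Fin.cons_self_tail (fun _ : Fin (n + 1) => a)]
  rfl

theorem Fin.update_const_zero {α : Type*} {n : ℕ} (a b : α) :
    Function.update (fun _ : Fin (n + 1) => a) 0 b = Fin.cons b fun _ => a := by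
  conv_lhs => rw [← Fin.cons_self_tail (fun _ : Fin (n + 1) => a)]
  exact Fin.update_cons_zero _ _ _

theorem fderiv_iteratedFDeriv_apply_const {g : E → F} {m : ℕ} (hg : ContDiff ℝ (m + 1) g)
    (x a : E) (w : Fin m → E) :
    fderiv ℝ (fun y => iteratedFDeriv ℝ m g y w) x a
      = iteratedFDeriv ℝ (m + 1) g x (Fin.cons a w) := by
  rw [fderiv_continuousMultilinear_apply_const_apply
    ((hg.differentiable_iteratedFDeriv (by norm_cast; omega)) x), iteratedFDeriv_succ_apply_left]
  rfl

theorem iteratedFDeriv_cons_cons_swap {g : E → F} {m : ℕ} (hg : ContDiff ℝ (m + 2) g)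
    (x a b : E) (w : Fin m → E) :
    iteratedFDeriv ℝ (m + 2) g x (Fin.cons a (Fin.cons b w))
      = iteratedFDeriv ℝ (m + 2) g x (Fin.cons b (Fin.cons a w)) := by
  have hD : ContDiff ℝ 2 (iteratedFDeriv ℝ m g) := hg.iteratedFDeriv_right (by norm_cast; omega)
  have hsymm : IsSymmSndFDerivAt ℝ (iteratedFDeriv ℝ m g) x :=
    hD.contDiffAt.isSymmSndFDerivAt (by simp [minSmoothness_of_isRCLikeNormedField])
  have hD' : Differentiable ℝ (fderiv ℝ (iteratedFDeriv ℝ m g)) :=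
    (hD.fderiv_right (m := 1) le_rfl).differentiable one_ne_zero
  have hfderiv_fderiv : ∀ a b, iteratedFDeriv ℝ (m + 2) g x (Fin.cons a (Fin.cons b w))
      = fderiv ℝ (fderiv ℝ (iteratedFDeriv ℝ m g)) x a b w := fun a b => by
    have hcons : ∀ y, iteratedFDeriv ℝ (m + 1) g y (Fin.cons b w)
        = fderiv ℝ (iteratedFDeriv ℝ m g) y b w := fun y => by
      rw [iteratedFDeriv_succ_apply_left]; rfl
    rw [← fderiv_iteratedFDeriv_apply_const hg, funext hcons,
      fderiv_continuousMultilinear_apply_const_apply ((hD' x).clm_apply (differentiableAt_const b)),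
      fderiv_clm_apply (hD' x) (differentiableAt_const b)]
    simp
  rw [hfderiv_fderiv, hfderiv_fderiv, hsymm.eq]

theorem iteratedFDeriv_update_eq_update_last {i : ℕ} {g : E → F}
    (hg : ContDiff ℝ (i + 1) g) (x s v : E) (k : Fin (i + 1)) :
    iteratedFDeriv ℝ (i + 1) g x (Function.update (fun _ => s) k v)
      = iteratedFDeriv ℝ (i + 1) g x (Function.update (fun _ => s) (Fin.last i) v) := by
  induction i generalizing x with
  | zero => rw [Subsingleton.elim (α := Fin 1) k (Fin.last 0)]
  | succ m ih =>
    have hsucc : ∀ k : Fin (m + 1),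
        iteratedFDeriv ℝ (m + 2) g x (Function.update (fun _ => s) k.succ v)
          = iteratedFDeriv ℝ (m + 2) g x (Function.update (fun _ => s) (Fin.last (m + 1)) v) := by
      intro k
      rw [← Fin.succ_last, Fin.update_const_succ, Fin.update_const_succ,
        ← fderiv_iteratedFDeriv_apply_const hg, ← fderiv_iteratedFDeriv_apply_const hg,
        funext fun y => ih (hg.of_le (by norm_cast; omega)) y k]
    induction k using Fin.cases with
    | succ k => exact hsucc k
    | zero =>
      have hconst : (fun _ : Fin (m + 1) => s) = Fin.cons s fun _ : Fin m => s :=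
        (Fin.cons_self_tail _).symm
      rw [← hsucc 0, Fin.update_const_succ, Fin.update_const_zero, Fin.update_const_zero, hconst]
      exact iteratedFDeriv_cons_cons_swap hg x v s _

theorem hasFDerivAt_iteratedFDeriv_diag {j : ℕ} {g : E → F} (hg : ContDiff ℝ (j + 1) g)
    (x s : E) :
    HasFDerivAt (fun t => iteratedFDeriv ℝ (j + 1) g x (fun _ => t))
      (((j + 1 : ℕ) : ℝ) • (iteratedFDeriv ℝ (j + 1) g x).toContinuousLinearMap
        (fun _ => s) (Fin.last j)) s := by
  have hdiag : HasFDerivAt (fun t : E => fun _ : Fin (j + 1) => t)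
      (ContinuousLinearMap.pi fun _ => ContinuousLinearMap.id ℝ E) s :=
    (ContinuousLinearMap.pi fun _ => ContinuousLinearMap.id ℝ E).hasFDerivAt
  refine (((iteratedFDeriv ℝ (j + 1) g x).hasFDerivAt (fun _ => s)).comp s hdiag).congr_fderiv ?_
  ext v
  simp [ContinuousMultilinearMap.linearDeriv_apply, iteratedFDeriv_update_eq_update_last hg,
    ← Nat.cast_smul_eq_nsmul ℝ]

noncomputable def taylorFDeriv (f : E → F) (p : ℕ) (x s : E) : E →L[ℝ] F :=
  ∑ j ∈ range p, (1 / (j ! : ℝ)) •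
    (iteratedFDeriv ℝ (j + 1) f x).toContinuousLinearMap (fun _ => s) (Fin.last j)

theorem sum_Icc_one_eq_sum_range {M : Type*} [AddCommMonoid M] (g : ℕ → M) (p : ℕ) :
    ∑ i ∈ Icc 1 p, g i = ∑ j ∈ range p, g (j + 1) := by
  rw [range_eq_Ico, sum_Ico_add', zero_add, Finset.Ico_add_one_right_eq_Icc]

theorem hasFDerivAt_taylor {f : E → F} {p : ℕ} (hf : ContDiff ℝ p f) (x s : E) :
    HasFDerivAt
      (fun t => f x + ∑ i ∈ Icc 1 p, (1 / (i ! : ℝ)) • iteratedFDeriv ℝ i f x (fun _ => t))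
      (taylorFDeriv f p x s) s := by
  simp_rw [sum_Icc_one_eq_sum_range]
  refine (HasFDerivAt.fun_sum fun j hj => ?_).const_add (f x)
  have hj : j + 1 ≤ p := mem_range.mp hj
  convert (hasFDerivAt_iteratedFDeriv_diag (hf.of_le (by exact_mod_cast hj)) x s).fun_const_smul
    (1 / ((j + 1) ! : ℝ)) using 1
  rw [smul_smul, factorial_succ]
  congr 1
  push_cast
  field_simp

theorem hasDerivAt_pow_div_factorial (n : ℕ) (τ : ℝ) :
    HasDerivAt (fun τ : ℝ => τ ^ (n + 1) / (n + 1)!) (τ ^ n / n !) τ := by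
  refine ((hasDerivAt_pow (n + 1) τ).div_const ((n + 1)! : ℝ)).congr_deriv ?_
  push_cast [factorial_succ]
  field_simp

theorem hasDerivAt_sum_pow_div_factorial_smul (c : ℕ → F) (n : ℕ) (τ : ℝ) :
    HasDerivAt (fun τ : ℝ => ∑ j ∈ range (n + 1), (τ ^ j / j !) • c j)
      (∑ j ∈ range n, (τ ^ j / j !) • c (j + 1)) τ := by
  have hsplit : ∀ τ : ℝ, ∑ j ∈ range (n + 1), (τ ^ j / j !) • c j
      = ∑ j ∈ range n, (τ ^ (j + 1) / (j + 1)!) • c (j + 1) + c 0 := fun τ => by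
    simp [sum_range_succ']
  simp_rw [hsplit]
  exact (HasDerivAt.fun_sum fun j _ =>
    (hasDerivAt_pow_div_factorial j τ).smul_const (c (j + 1))).add_const _

theorem norm_sub_taylor_le_of_lipschitz {m : ℕ} {G : ℕ → ℝ → F} {K : ℝ}
    (hderiv : ∀ j < m, ∀ t, HasDerivAt (G j) (G (j + 1) t) t)
    (hlip : ∀ t, 0 ≤ t → ‖G m t - G m 0‖ ≤ K * t) {t : ℝ} (ht : 0 ≤ t) :
    ‖G 0 t - ∑ j ∈ range (m + 1), (t ^ j / j !) • G j 0‖ ≤ K * (t ^ (m + 1) / (m + 1)!) := by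
  induction m generalizing G t with
  | zero => simpa using hlip t ht
  | succ m ih =>
    have hH : ∀ τ, HasDerivAt (fun τ => G 0 τ - ∑ j ∈ range (m + 2), (τ ^ j / j !) • G j 0)
        (G 1 τ - ∑ j ∈ range (m + 1), (τ ^ j / j !) • G (j + 1) 0) τ := fun τ =>
      (hderiv 0 (by omega) τ).sub (hasDerivAt_sum_pow_div_factorial_smul _ _ τ)
    refine image_norm_le_of_norm_deriv_right_le_deriv_boundary (a := 0)
      (fun τ _ => (hH τ).continuousAt.continuousWithinAt) (fun τ _ => (hH τ).hasDerivWithinAt)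
      (B := fun τ => K * (τ ^ (m + 2) / (m + 2)!)) ?_
      (fun τ => (hasDerivAt_pow_div_factorial (m + 1) τ).const_mul K)
      (fun τ hτ => ih (G := fun j => G (j + 1)) (fun j hj => hderiv (j + 1) (by omega)) hlip hτ.1)
      ⟨ht, le_rfl⟩
    simp [sum_range_succ']

theorem hasDerivAt_iteratedFDeriv_apply_line {f : E → F} {k : ℕ} (hf : ContDiff ℝ (k + 1) f)
    (x s : E) (w : Fin k → E) (t : ℝ) :
    HasDerivAt (fun t : ℝ => iteratedFDeriv ℝ k f (x + t • s) w)
      (iteratedFDeriv ℝ (k + 1) f (x + t • s) (Fin.cons s w)) t := by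
  have hline : HasDerivAt (fun t : ℝ => x + t • s) s t := by
    simpa using ((hasDerivAt_id t).smul_const s).const_add x
  have hdiff : Differentiable ℝ fun y => iteratedFDeriv ℝ k f y w :=
    (hf.differentiable_iteratedFDeriv (by norm_cast; omega)).continuousMultilinear_apply_const w
  refine ((hdiff _).hasFDerivAt.comp_hasDerivAt t hline).congr_deriv ?_
  exact fderiv_iteratedFDeriv_apply_const hf _ _ _

theorem norm_fderiv_apply_sub_taylorFDeriv_apply_le {f : E → F} {m : ℕ} {L : ℝ}
    (hf : ContDiff ℝ (m + 1) f)
    (hlip : ∀ x y, ‖iteratedFDeriv ℝ (m + 1) f x - iteratedFDeriv ℝ (m + 1) f y‖ ≤ L * ‖x - y‖)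
    (x s v : E) :
    ‖fderiv ℝ f (x + s) v - taylorFDeriv f (m + 1) x s v‖
      ≤ L * ‖s‖ ^ (m + 1) / (m + 1)! * ‖v‖ := by
  set G : ℕ → ℝ → F := fun j t =>
    iteratedFDeriv ℝ (j + 1) f (x + t • s) (Function.update (fun _ => s) (Fin.last j) v)
  have hderiv : ∀ j < m, ∀ t, HasDerivAt (G j) (G (j + 1) t) t := fun j hj t => by
    have := hasDerivAt_iteratedFDeriv_apply_line (hf.of_le (by norm_cast; omega)) x s
      (Function.update (fun _ => s) (Fin.last j) v) t
    rwa [← Fin.update_const_succ, Fin.succ_last] at this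
  have hprod : ∏ i, ‖Function.update (fun _ => s) (Fin.last m) v i‖ = ‖s‖ ^ m * ‖v‖ := by
    simp [Fin.prod_univ_castSucc]
  have hGlip : ∀ t, 0 ≤ t → ‖G m t - G m 0‖ ≤ L * ‖s‖ ^ (m + 1) * ‖v‖ * t := fun t ht =>
    calc ‖G m t - G m 0‖
        ≤ ‖iteratedFDeriv ℝ (m + 1) f (x + t • s) - iteratedFDeriv ℝ (m + 1) f (x + (0 : ℝ) • s)‖
          * ∏ i, ‖Function.update (fun _ => s) (Fin.last m) v i‖ :=
        ContinuousMultilinearMap.le_opNorm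
          (iteratedFDeriv ℝ (m + 1) f (x + t • s) - iteratedFDeriv ℝ (m + 1) f (x + (0 : ℝ) • s)) _
      _ ≤ L * (t * ‖s‖) * (‖s‖ ^ m * ‖v‖) := by
        rw [hprod]
        gcongr
        simpa [norm_smul, abs_of_nonneg ht] using hlip (x + t • s) (x + (0 : ℝ) • s)
      _ = L * ‖s‖ ^ (m + 1) * ‖v‖ * t := by ring
  have hG0 : G 0 1 = fderiv ℝ f (x + s) v := by simp [G, iteratedFDeriv_one_apply]
  have hsum : ∑ j ∈ range (m + 1), ((1 : ℝ) ^ j / j !) • G j 0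
      = taylorFDeriv f (m + 1) x s v := by
    simp [G, taylorFDeriv]
  have htaylor := norm_sub_taylor_le_of_lipschitz hderiv hGlip zero_le_one
  rw [hG0, hsum] at htaylor
  exact htaylor.trans_eq (by rw [one_pow]; ring)

theorem norm_fderiv_sub_taylorFDeriv_le {f : E → F} {p : ℕ} {L : ℝ} (hp : 1 ≤ p) (hL : 0 ≤ L)
    (hf : ContDiff ℝ p f)
    (hlip : ∀ x y, ‖iteratedFDeriv ℝ p f x - iteratedFDeriv ℝ p f y‖ ≤ L * ‖x - y‖) (x s : E) :
    ‖fderiv ℝ f (x + s) - taylorFDeriv f p x s‖ ≤ L * ‖s‖ ^ p / p ! := by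
  obtain ⟨m, rfl⟩ : ∃ m, p = m + 1 := ⟨p - 1, by omega⟩
  exact ContinuousLinearMap.opNorm_le_bound _ (by positivity)
    (norm_fderiv_apply_sub_taylorFDeriv_apply_le (by exact_mod_cast hf) hlip x s)

theorem norm_gradient_sub_gradient_taylor_le {H : Type*} [NormedAddCommGroup H]
    [InnerProductSpace ℝ H] [CompleteSpace H] {f : H → ℝ} {p : ℕ} {L : ℝ} (hp : 1 ≤ p)
    (hL : 0 ≤ L) (hf : ContDiff ℝ p f)
    (hlip : ∀ x y, ‖iteratedFDeriv ℝ p f x - iteratedFDeriv ℝ p f y‖ ≤ L * ‖x - y‖) (x s : H) :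
    ‖gradient f (x + s) - gradient
        (fun t => f x + ∑ i ∈ Icc 1 p, (1 / (i ! : ℝ)) * iteratedFDeriv ℝ i f x (fun _ => t)) s‖
      ≤ L * ‖s‖ ^ p / p ! := by
  have hT : HasGradientAt
      (fun t => f x + ∑ i ∈ Icc 1 p, (1 / (i ! : ℝ)) * iteratedFDeriv ℝ i f x (fun _ => t))
      ((InnerProductSpace.toDual ℝ H).symm (taylorFDeriv f p x s)) s :=
    (hasFDerivAt_taylor hf x s).hasGradientAt
  rw [hT.gradient, gradient, ← map_sub, LinearIsometryEquiv.norm_map]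
  exact norm_fderiv_sub_taylorFDeriv_le hp hL hf hlip x s

theorem mu_lower_bound_general {n l : ℕ} (p : ℕ) (hp : 1 ≤ p)
    (f : EuclideanSpace ℝ (Fin n) → ℝ) (L : ℝ) (hL : 0 ≤ L)
    (hf : ContDiff ℝ (p : ℕ∞) f)
    (hlip : ∀ x y : EuclideanSpace ℝ (Fin n),
      ‖iteratedFDeriv ℝ p f x - iteratedFDeriv ℝ p f y‖ ≤ L * ‖x - y‖)
    (S : EuclideanSpace ℝ (Fin n) →L[ℝ] EuclideanSpace ℝ (Fin l))
    (x : EuclideanSpace ℝ (Fin n)) (shat : EuclideanSpace ℝ (Fin l))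
    (s : EuclideanSpace ℝ (Fin n))
    -- the sketched gradient condition (chain rule identity):
    (hchain : gradient (fun t => taylorPoly p f x (ContinuousLinearMap.adjoint S t)) shat
      = S (gradient (fun t => taylorPoly p f x t) s)) :
    (‖S (gradient f (x + s))‖
        - ‖gradient (fun t => taylorPoly p f x (ContinuousLinearMap.adjoint S t)) shat‖)
      / (‖S‖ * ‖s‖ ^ p) ≤ L := by
  have hremainder : ‖gradient f (x + s) - gradient (fun t => taylorPoly p f x t) s‖
      ≤ L * ‖s‖ ^ p :=
    (norm_gradient_sub_gradient_taylor_le hp hL (by exact_mod_cast hf) hlip x s).trans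
      (div_le_self (by positivity) (by exact_mod_cast factorial_pos p))
  rw [hchain]
  refine div_le_of_le_mul₀ (by positivity) hL ?_
  calc ‖S (gradient f (x + s))‖ - ‖S (gradient (fun t => taylorPoly p f x t) s)‖
      ≤ ‖S (gradient f (x + s) - gradient (fun t => taylorPoly p f x t) s)‖ := by
        rw [map_sub]; exact norm_sub_norm_le _ _
    _ ≤ ‖S‖ * (L * ‖s‖ ^ p) := S.le_opNorm_of_le hremainder
    _ = L * (‖S‖ * ‖s‖ ^ p) := by ring

/-- The quantity `(‖S_{k-1} g_k‖ - ‖∇_ŝ T̂(x_{k-1}, ŝ_{k-1})‖)/(‖S_{k-1}‖ ‖s_{k-1}‖^p)`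
is a lower bound on the Lipschitz constant `L_p`. -/
theorem mu_lower_bound {n l : ℕ} (p : ℕ) (hp : 1 ≤ p)
    (f : EuclideanSpace ℝ (Fin n) → ℝ) (L : ℝ) (hL : 0 ≤ L)
    (hf : ContDiff ℝ (p : ℕ∞) f)
    (hlip : ∀ x y : EuclideanSpace ℝ (Fin n),
      ‖iteratedFDeriv ℝ p f x - iteratedFDeriv ℝ p f y‖ ≤ L * ‖x - y‖)
    (S : EuclideanSpace ℝ (Fin n) →L[ℝ] EuclideanSpace ℝ (Fin l))
    (x : EuclideanSpace ℝ (Fin n)) (shat : EuclideanSpace ℝ (Fin l))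
    (s : EuclideanSpace ℝ (Fin n)) (hs : s = ContinuousLinearMap.adjoint S shat)
    (hsne : s ≠ 0) (hSpos : 0 < ‖S‖)
    -- the sketched gradient condition (chain rule identity):
    (hchain : gradient (fun t => taylorPoly p f x (ContinuousLinearMap.adjoint S t)) shat
      = S (gradient (fun t => taylorPoly p f x t) s)) :
    (‖S (gradient f (x + s))‖
        - ‖gradient (fun t => taylorPoly p f x (ContinuousLinearMap.adjoint S t)) shat‖)
      / (‖S‖ * ‖s‖ ^ p) ≤ L :=
  mu_lower_bound_general p hp f L hL hf hlip S x shat s hchain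
end

section
/- Suppose for each iteration j with k_1 <= j <= k-1 we have f(x_j) - f(x_{j+1}) >= (theta/(2(p+1)!)) nu_j ||s_j||^{p+1}, where nu_{j+1} = nu_j + nu_j ||s_j||^{p+1}, and f(x) >= f_low for all x. Then nu_k <= (2(p+1)!/theta)(f(x_{k_1}) - f_low) + nu_{k_1}. -/
/-! Each accepted step raises `ν` by `ν_j ‖s_j‖^(p+1)`, which the sufficient-decrease condition
bounds by `2(p+1)!/θ` times the decrease of `f`. Summing telescopes, and the total decrease of `f`
from `x_{k₁}` is at most `f(x_{k₁}) - f_low`. -/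

lemma sub_le_sub_of_succ_sub_le {a b : ℕ → ℝ} {m k : ℕ} (hmk : m ≤ k)
    (h : ∀ j, m ≤ j → j < k → a (j + 1) - a j ≤ b j - b (j + 1)) :
    a k - a m ≤ b m - b k := by
  induction k, hmk using Nat.le_induction with
  | base => simp
  | succ k hmk ih =>
    have hstep := h k hmk k.lt_succ_self
    have hprev := ih fun j hmj hjk => h j hmj (hjk.trans k.lt_succ_self)
    linarith

theorem nu_upper_bound_general {n : ℕ} (p : ℕ)
    (f : EuclideanSpace ℝ (Fin n) → ℝ) (flow θ : ℝ) (hθ0 : 0 < θ)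
    (x s : ℕ → EuclideanSpace ℝ (Fin n)) (ν : ℕ → ℝ) (k1 k : ℕ) (hk : k1 ≤ k)
    (hbound : ∀ y, flow ≤ f y)
    (hν : ∀ j, ν (j + 1) = ν j + ν j * ‖s j‖ ^ (p + 1))
    (hdec : ∀ j, k1 ≤ j → j < k →
      θ / (2 * ((p + 1).factorial : ℝ)) * ν j * ‖s j‖ ^ (p + 1) ≤ f (x j) - f (x (j + 1))) :
    ν k ≤ 2 * ((p + 1).factorial : ℝ) / θ * (f (x k1) - flow) + ν k1 := by
  set c : ℝ := 2 * ((p + 1).factorial : ℝ) / θ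
  have hc : 0 < c := by positivity
  have hstep : ∀ j, k1 ≤ j → j < k →
      ν (j + 1) - ν j ≤ c * f (x j) - c * f (x (j + 1)) := by
    intro j hj hjk
    have h := hdec j hj hjk
    have hq : θ / (2 * ((p + 1).factorial : ℝ)) * c = 1 := by
      simp only [c]; field_simp
    calc ν (j + 1) - ν j
        = c * (θ / (2 * ((p + 1).factorial : ℝ)) * ν j * ‖s j‖ ^ (p + 1)) := by
          rw [hν j]; linear_combination (-(ν j * ‖s j‖ ^ (p + 1))) * hq
      _ ≤ c * f (x j) - c * f (x (j + 1)) := by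
          rw [← mul_sub]; exact mul_le_mul_of_nonneg_left h hc.le
  have htotal := sub_le_sub_of_succ_sub_le hk hstep
  have hlow : c * flow ≤ c * f (x k) := mul_le_mul_of_nonneg_left (hbound _) hc.le
  linarith

/-- Telescoping bound on the regularisation parameter:
if from `k₁` on each iteration decreases `f` by at least `(θ/(2(p+1)!)) ν_j ‖s_j‖^(p+1)`
and `f` is bounded below, then `ν_k ≤ (2(p+1)!/θ)(f(x_{k₁}) - f_low) + ν_{k₁}`. -/
theorem nu_upper_bound {n : ℕ} (p : ℕ) (hp : 1 ≤ p)
    (f : EuclideanSpace ℝ (Fin n) → ℝ) (flow θ : ℝ) (hθ0 : 0 < θ) (hθ1 : θ < 1)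
    (x s : ℕ → EuclideanSpace ℝ (Fin n)) (ν : ℕ → ℝ) (k1 k : ℕ) (hk : k1 ≤ k)
    (hbound : ∀ y, flow ≤ f y)
    (hx : ∀ j, x (j + 1) = x j + s j)
    (hν : ∀ j, ν (j + 1) = ν j + ν j * ‖s j‖ ^ (p + 1))
    (hνpos : ∀ j, 0 < ν j)
    (hdec : ∀ j, k1 ≤ j → j < k →
      θ / (2 * ((p + 1).factorial : ℝ)) * ν j * ‖s j‖ ^ (p + 1) ≤ f (x j) - f (x (j + 1))) :
    ν k ≤ 2 * ((p + 1).factorial : ℝ) / θ * (f (x k1) - flow) + ν k1 :=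
  nu_upper_bound_general p f flow θ hθ0 x s ν k1 k hk hbound hν hdec
end

section
/- Suppose S is an l x n matrix with ||S g|| >= alpha ||g||, ||S|| <= S_max, B is an n x n matrix with ||B|| <= kappa_B, sigma > 0, theta > 0, and s = S^T shat satisfies ||S g + S B s|| <= theta sigma ||S s||. Then ||s|| >= alpha ||g|| / (S_max (kappa_B + theta sigma)). -/
/-- Step lower bound for the quadratically-regularised sketched model:
if `‖S g‖ ≥ α‖g‖`, `‖S‖ ≤ S_max`, `‖B‖ ≤ κ_B` and the sketched stationarity condition
`‖S g + S B s‖ ≤ θ σ ‖S s‖` holds for `s = Sᵀ ŝ`, then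
`‖s‖ ≥ α ‖g‖ / (S_max (κ_B + θ σ))`. -/
theorem step_lower_bound_B {n l : ℕ}
    (α Smax κB σ θ : ℝ) (hα0 : 0 < α) (hα1 : α < 1) (hSmax : 0 < Smax)
    (hσ : 0 < σ) (hθ : 0 < θ)
    (g : EuclideanSpace ℝ (Fin n))
    (S : EuclideanSpace ℝ (Fin n) →L[ℝ] EuclideanSpace ℝ (Fin l))
    (B : EuclideanSpace ℝ (Fin n) →L[ℝ] EuclideanSpace ℝ (Fin n))
    (hemb : α * ‖g‖ ≤ ‖S g‖) (hSnorm : ‖S‖ ≤ Smax) (hB : ‖B‖ ≤ κB)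
    (shat : EuclideanSpace ℝ (Fin l)) (s : EuclideanSpace ℝ (Fin n))
    (hs : s = ContinuousLinearMap.adjoint S shat)
    (hstat : ‖S g + S (B s)‖ ≤ θ * σ * ‖S s‖) :
    α * ‖g‖ / (Smax * (κB + θ * σ)) ≤ ‖s‖ := by
  have hκ : 0 ≤ κB := le_trans (norm_nonneg B) hB
  have hden : 0 < Smax * (κB + θ * σ) := by positivity
  rw [div_le_iff₀ hden]
  have h1 : ‖S g‖ ≤ ‖S g + S (B s)‖ + ‖S (B s)‖ := by
    calc ‖S g‖ = ‖(S g + S (B s)) - S (B s)‖ := by rw [add_sub_cancel_right]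
      _ ≤ ‖S g + S (B s)‖ + ‖S (B s)‖ := norm_sub_le _ _
  have h2 : ‖S (B s)‖ ≤ Smax * κB * ‖s‖ := by
    calc ‖S (B s)‖ ≤ ‖S‖ * ‖B s‖ := S.le_opNorm _
      _ ≤ ‖S‖ * (‖B‖ * ‖s‖) := by
          exact mul_le_mul_of_nonneg_left (B.le_opNorm s) (norm_nonneg S)
      _ ≤ Smax * (κB * ‖s‖) := by
          apply mul_le_mul hSnorm (mul_le_mul_of_nonneg_right hB (norm_nonneg s))
            (by positivity) hSmax.le
      _ = Smax * κB * ‖s‖ := by ring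
  have h3 : ‖S s‖ ≤ Smax * ‖s‖ :=
    le_trans (S.le_opNorm s) (mul_le_mul_of_nonneg_right hSnorm (norm_nonneg s))
  calc α * ‖g‖ ≤ ‖S g‖ := hemb
    _ ≤ ‖S g + S (B s)‖ + ‖S (B s)‖ := h1
    _ ≤ θ * σ * ‖S s‖ + Smax * κB * ‖s‖ := add_le_add hstat h2
    _ ≤ θ * σ * (Smax * ‖s‖) + Smax * κB * ‖s‖ := by
        have : 0 ≤ θ * σ := by positivity
        nlinarith
    _ = ‖s‖ * (Smax * (κB + θ * σ)) := by ring
end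

section
/- Suppose f is C^1 with L-Lipschitz gradient, B is symmetric positive semidefinite with ||B|| <= kappa_B, and the step s satisfies f(x) + g^T s + (1/2) s^T B s + (sigma/2)||s||^2 < f(x) with sigma >= 2(L + kappa_B). Then f(x) - f(x+s) > (sigma/4)||s||^2. -/
open RealInnerProductSpace

/-! Along the segment `t ↦ x + t • s` the Lipschitz bound on `∇f` makes the derivative of
`t ↦ f (x + t • s)` exceed its value at `0` by at most `L t ‖s‖²`; integrating over `[0, 1]` gives
the descent inequality `f (x + s) ≤ f x + ⟪∇f x, s⟫ + (L/2) ‖s‖²`. The model decrease, together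
with `⟪s, B s⟫ ≥ -κB ‖s‖²`, gives `⟪∇f x, s⟫ < ((κB - σ)/2) ‖s‖²`, so
`f x - f (x + s) > ((σ - L - κB)/2) ‖s‖² ≥ (σ/4) ‖s‖²`. -/

theorem le_add_deriv_add_half_of_deriv_sub_le {φ φ' : ℝ → ℝ} {M : ℝ}
    (hφ : ∀ t, HasDerivAt φ (φ' t) t) (hφ' : ∀ t ∈ Set.Ioo (0 : ℝ) 1, φ' t - φ' 0 ≤ M * t) :
    φ 1 ≤ φ 0 + φ' 0 + M / 2 := by
  set ψ : ℝ → ℝ := fun t => φ t - t * φ' 0 - M / 2 * t ^ 2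
  have hψ : ∀ t, HasDerivAt ψ (φ' t - φ' 0 - M * t) t := fun t =>
    (((hφ t).sub ((hasDerivAt_id' t).mul_const (φ' 0))).sub
      ((hasDerivAt_pow 2 t).const_mul (M / 2))).congr_deriv (by ring)
  have hanti : AntitoneOn ψ (Set.Icc 0 1) :=
    antitoneOn_of_hasDerivWithinAt_nonpos (convex_Icc 0 1)
      (fun t _ => (hψ t).continuousAt.continuousWithinAt)
      (fun t _ => (hψ t).hasDerivWithinAt)
      (fun t ht => by rw [interior_Icc] at ht; linarith [hφ' t ht])
  have hends := hanti (Set.left_mem_Icc.2 zero_le_one) (Set.right_mem_Icc.2 zero_le_one) zero_le_one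
  simp only [ψ] at hends
  linarith

section InnerProductSpace

variable {E : Type*} [NormedAddCommGroup E] [InnerProductSpace ℝ E]

theorem neg_opNorm_mul_sq_le_inner_self_apply (B : E →L[ℝ] E) (s : E) :
    -(‖B‖ * ‖s‖ ^ 2) ≤ ⟪s, B s⟫ := by
  have h := (abs_real_inner_le_norm s (B s)).trans
    (mul_le_mul_of_nonneg_left (B.le_opNorm s) (norm_nonneg s))
  rw [abs_le] at h
  linarith [h.1]

variable [CompleteSpace E]

theorem hasDerivAt_comp_add_smul {f : E → ℝ} {x s : E} {t : ℝ}
    (hf : DifferentiableAt ℝ f (x + t • s)) :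
    HasDerivAt (fun t : ℝ => f (x + t • s)) ⟪gradient f (x + t • s), s⟫ t := by
  have hline : HasDerivAt (fun t : ℝ => x + t • s) s t := by
    simpa using ((hasDerivAt_id t).smul_const s).const_add x
  simpa [Function.comp_def] using hf.hasGradientAt.hasFDerivAt.comp_hasDerivAt t hline

theorem le_add_inner_gradient_add_sq_of_norm_gradient_sub_le {f : E → ℝ} {L : ℝ} {x : E}
    (hf : Differentiable ℝ f) (hlip : ∀ y, ‖gradient f y - gradient f x‖ ≤ L * ‖y - x‖) (s : E) :
    f (x + s) ≤ f x + ⟪gradient f x, s⟫ + L / 2 * ‖s‖ ^ 2 := by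
  have h := le_add_deriv_add_half_of_deriv_sub_le (M := L * ‖s‖ ^ 2)
    (fun t => hasDerivAt_comp_add_smul (hf (x + t • s))) fun t ht => ?_
  · simpa [mul_div_right_comm] using h
  calc ⟪gradient f (x + t • s), s⟫ - ⟪gradient f (x + (0 : ℝ) • s), s⟫
      = ⟪gradient f (x + t • s) - gradient f x, s⟫ := by rw [zero_smul, add_zero, inner_sub_left]
    _ ≤ ‖gradient f (x + t • s) - gradient f x‖ * ‖s‖ := real_inner_le_norm _ _
    _ ≤ L * ‖(x + t • s) - x‖ * ‖s‖ := by gcongr; exact hlip _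
    _ = L * ‖s‖ ^ 2 * t := by
      rw [add_sub_cancel_left, norm_smul, Real.norm_of_nonneg ht.1.le]
      ring

end InnerProductSpace

theorem quadratic_sufficient_decrease_general {n : ℕ}
    (f : EuclideanSpace ℝ (Fin n) → ℝ) (L κB σ : ℝ)
    (hf : Differentiable ℝ f)
    (hlip : ∀ x y : EuclideanSpace ℝ (Fin n),
      ‖gradient f x - gradient f y‖ ≤ L * ‖x - y‖)
    (B : EuclideanSpace ℝ (Fin n) →L[ℝ] EuclideanSpace ℝ (Fin n))
    (hB : ‖B‖ ≤ κB)
    (x s : EuclideanSpace ℝ (Fin n))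
    (hmodel : f x + ⟪gradient f x, s⟫ + (1 / 2) * ⟪s, B s⟫ + σ / 2 * ‖s‖ ^ 2 < f x)
    (hσ : 2 * (L + κB) ≤ σ) :
    σ / 4 * ‖s‖ ^ 2 < f x - f (x + s) := by
  have hdescent := le_add_inner_gradient_add_sq_of_norm_gradient_sub_le hf (fun y => hlip y x) s
  have hcurvature : -(κB * ‖s‖ ^ 2) ≤ ⟪s, B s⟫ :=
    (neg_le_neg (mul_le_mul_of_nonneg_right hB (sq_nonneg _))).trans
      (neg_opNorm_mul_sq_le_inner_self_apply B s)
  linarith [mul_nonneg (sub_nonneg.2 hσ) (sq_nonneg ‖s‖)]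

/-- Quadratic-regularisation sufficient-decrease lemma: if `f` has `L`-Lipschitz gradient,
`B` is symmetric positive semidefinite with `‖B‖ ≤ κ_B`, the regularised quadratic model
decreases at `s`, and `σ ≥ 2(L + κ_B)`, then `f(x) - f(x+s) > (σ/4)‖s‖²`. -/
theorem quadratic_sufficient_decrease {n : ℕ}
    (f : EuclideanSpace ℝ (Fin n) → ℝ) (L κB σ : ℝ) (hL : 0 ≤ L) (hκB : 0 ≤ κB)
    (hf : Differentiable ℝ f)
    (hlip : ∀ x y : EuclideanSpace ℝ (Fin n),
      ‖gradient f x - gradient f y‖ ≤ L * ‖x - y‖)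
    (B : EuclideanSpace ℝ (Fin n) →L[ℝ] EuclideanSpace ℝ (Fin n))
    (hsym : ∀ u v : EuclideanSpace ℝ (Fin n), ⟪B u, v⟫ = ⟪u, B v⟫)
    (hpsd : ∀ v : EuclideanSpace ℝ (Fin n), 0 ≤ ⟪B v, v⟫)
    (hB : ‖B‖ ≤ κB)
    (x s : EuclideanSpace ℝ (Fin n))
    (hmodel : f x + ⟪gradient f x, s⟫ + (1 / 2) * ⟪s, B s⟫ + σ / 2 * ‖s‖ ^ 2 < f x)
    (hσ : 2 * (L + κB) ≤ σ) :
    σ / 4 * ‖s‖ ^ 2 < f x - f (x + s) :=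
  quadratic_sufficient_decrease_general f L κB σ hf hlip B hB x s hmodel hσ
end
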